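/- Let G be the subring of ℂ[[X]] consisting of power series Σ_{n≥0} a_n X^n for which there exist A, C > 0 with |a_n| ≤ A·C^n·n! for all n. Then the full ring of formal power series ℂ[[X]], regarded as a G-module via the inclusion G ⊆ ℂ[[X]], is a faithfully flat G-module. -/

import Mathlib

/-!
The Gevrey series are stable under dividing out a power of `X` and, when the constant term is
nonzero, under inversion: in the recursion `c·b_{m+1} = -∑_{i+j=m} a_{i+1} b_j` for the
coefficients of `f⁻¹`, the inequality `i! j! ≤ (i+j)!` reduces the bound to a geometric sum.
Hence every nonzero element of `G` is `X^n` times a unit of `G`, so divisibility in `G` is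
divisibility in `ℂ⟦X⟧`. Then `G` inherits from `ℂ⟦X⟧` the property of being a valuation ring,
`ℂ⟦X⟧` is a torsion-free, hence flat, module over the Bézout domain `G`, and the inclusion is a
local homomorphism of local rings, which makes it faithfully flat.
-/

set_option synthInstance.maxHeartbeats 1000000

/-- The Gevrey-type growth condition defining the ring `G = k₀ = W_pt(0)` of the paper
(written in the variable `X = τ⁻¹`): `|a_n| ≤ A·C^n·n!` for some `A, C > 0`. -/
def Gevrey (f : PowerSeries ℂ) : Prop :=
  ∃ A C : ℝ, 0 < A ∧ 0 < C ∧
    ∀ n : ℕ, ‖PowerSeries.coeff n f‖ ≤ A * C ^ n * n.factorial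

open PowerSeries Finset
open scoped Nat

theorem Module.FaithfullyFlat.of_valuationRing_of_dvd_of_algebraMap_dvd {R A : Type*}
    [CommRing R] [CommRing A] [IsDomain A] [ValuationRing A] [Algebra R A] [FaithfulSMul R A]
    (hdvd : ∀ a b : R, algebraMap R A a ∣ algebraMap R A b → a ∣ b) :
    Module.FaithfullyFlat R A := by
  have : IsDomain R := (FaithfulSMul.algebraMap_injective R A).isDomain
  have : ValuationRing R := ValuationRing.iff_dvd_total.mpr
    ⟨fun a b => (ValuationRing.dvd_total (algebraMap R A a) (algebraMap R A b)).imp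
      (hdvd a b) (hdvd b a)⟩
  have : IsLocalHom (algebraMap R A) :=
    ⟨fun a ha => isUnit_of_dvd_one (hdvd a 1 (by simpa using ha.dvd))⟩
  have : Module.Flat R A := Module.Flat.flat_iff_torsion_eq_bot_of_isBezout.mpr
    (Submodule.isTorsionFree_iff_torsion_eq_bot.mp inferInstance)
  exact .of_flat_of_isLocalHom

theorem PowerSeries.coeff_succ_inv {k : Type*} [Field k] {f : k⟦X⟧} (hf0 : constantCoeff f ≠ 0)
    (m : ℕ) :
    coeff (m + 1) f⁻¹ =
      -(constantCoeff f)⁻¹ * ∑ p ∈ antidiagonal m, coeff (p.1 + 1) f * coeff p.2 f⁻¹ := by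
  have h := congrArg (coeff (m + 1)) (PowerSeries.mul_inv_cancel f hf0)
  rw [coeff_mul, Nat.sum_antidiagonal_succ, coeff_one, if_neg m.succ_ne_zero,
    coeff_zero_eq_constantCoeff] at h
  field_simp
  linear_combination h

theorem Nat.factorial_add_le_two_pow_mul (m n : ℕ) : (m + n)! ≤ 2 ^ (m + n) * m ! * n ! := by
  rw [← Nat.add_choose_mul_factorial_mul_factorial]
  gcongr
  exact Nat.choose_le_two_pow _ _

theorem mul_sum_antidiagonal_pow_le {C : ℝ} (hC : 0 ≤ C) (M : ℝ) (m : ℕ) :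
    M * ∑ p ∈ antidiagonal m, C ^ (p.1 + 1) * (C * (1 + M)) ^ p.2 ≤ (C * (1 + M)) ^ (m + 1) := by
  set D := C * (1 + M)
  have hgeom := geom_sum₂_mul C D (m + 1)
  rw [Nat.add_sub_cancel] at hgeom
  calc M * ∑ p ∈ antidiagonal m, C ^ (p.1 + 1) * D ^ p.2
      = (∑ i ∈ range (m + 1), C ^ i * D ^ (m - i)) * (C - D) * -1 := by
        rw [Nat.sum_antidiagonal_eq_sum_range_succ_mk, mul_sum, sum_mul, sum_mul]
        refine sum_congr rfl fun i _ => ?_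
        simp only [D]; ring
    _ = D ^ (m + 1) - C ^ (m + 1) := by rw [hgeom]; ring
    _ ≤ D ^ (m + 1) := sub_le_self _ (by positivity)

theorem Gevrey.of_X_pow_mul {n : ℕ} {f : ℂ⟦X⟧} (hf : Gevrey (X ^ n * f)) : Gevrey f := by
  obtain ⟨A, C, hA, hC, hfA⟩ := hf
  refine ⟨A * (2 * C) ^ n * n !, 2 * C, by positivity, by positivity, fun m => ?_⟩
  have hfac : ((m + n)! : ℝ) ≤ 2 ^ (m + n) * m ! * n ! := by
    exact_mod_cast Nat.factorial_add_le_two_pow_mul m n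
  calc ‖coeff m f‖ = ‖coeff (m + n) (X ^ n * f)‖ := by rw [coeff_X_pow_mul]
    _ ≤ A * C ^ (m + n) * (m + n)! := hfA _
    _ ≤ A * C ^ (m + n) * (2 ^ (m + n) * m ! * n !) := by gcongr
    _ = A * (2 * C) ^ n * n ! * (2 * C) ^ m * m ! := by ring

theorem Gevrey.inv {f : ℂ⟦X⟧} (hf : Gevrey f) (hf0 : constantCoeff f ≠ 0) : Gevrey f⁻¹ := by
  obtain ⟨A, C, hA, hC, hfA⟩ := hf
  set K := ‖(constantCoeff f)⁻¹‖
  have hK : 0 < K := norm_pos_iff.mpr (inv_ne_zero hf0)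
  set D := C * (1 + A * K)
  refine ⟨K, D, hK, by positivity, fun n => ?_⟩
  induction n using Nat.strong_induction_on with | _ n ih => ?_
  rcases n with _ | m
  · simp [K]
  have hterm : ∀ p ∈ antidiagonal m, ‖coeff (p.1 + 1) f * coeff p.2 f⁻¹‖ ≤
      A * K * (m + 1)! * (C ^ (p.1 + 1) * D ^ p.2) := by
    intro p hp
    rw [HasAntidiagonal.mem_antidiagonal] at hp
    have hfac : ((p.1 + 1)! * p.2 ! : ℝ) ≤ (m + 1)! := by
      have := Nat.factorial_mul_factorial_dvd_factorial_add (p.1 + 1) p.2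
      rw [show p.1 + 1 + p.2 = m + 1 by omega] at this
      exact_mod_cast Nat.le_of_dvd (Nat.factorial_pos _) this
    calc ‖coeff (p.1 + 1) f * coeff p.2 f⁻¹‖
        ≤ (A * C ^ (p.1 + 1) * (p.1 + 1)!) * (K * D ^ p.2 * p.2 !) := by
          rw [norm_mul]
          gcongr
          · exact hfA _
          · exact ih _ (by omega)
      _ = A * K * ((p.1 + 1)! * p.2 ! : ℝ) * (C ^ (p.1 + 1) * D ^ p.2) := by ring
      _ ≤ A * K * (m + 1)! * (C ^ (p.1 + 1) * D ^ p.2) := by gcongr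
  calc ‖coeff (m + 1) f⁻¹‖
      ≤ K * ∑ p ∈ antidiagonal m, A * K * (m + 1)! * (C ^ (p.1 + 1) * D ^ p.2) := by
        rw [coeff_succ_inv hf0, norm_mul, norm_neg]
        gcongr
        exact norm_sum_le_of_le _ hterm
    _ = K * (m + 1)! * (A * K * ∑ p ∈ antidiagonal m, C ^ (p.1 + 1) * D ^ p.2) := by
        rw [← mul_sum]; ring
    _ ≤ K * (m + 1)! * D ^ (m + 1) := by
        gcongr
        exact mul_sum_antidiagonal_pow_le hC.le (A * K) m
    _ = K * D ^ (m + 1) * (m + 1)! := by ring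

theorem Gevrey.dvd_of_coe_dvd {S : Subalgebra ℂ ℂ⟦X⟧} (hS : (S : Set ℂ⟦X⟧) = {f | Gevrey f})
    {a b : S} (h : (a : ℂ⟦X⟧) ∣ b) : a ∣ b := by
  have hmem (f : ℂ⟦X⟧) : f ∈ S ↔ Gevrey f := Set.ext_iff.mp hS f
  obtain ⟨c, hc⟩ := h
  rcases eq_or_ne a 0 with rfl | ha
  · obtain rfl : b = 0 := Subtype.ext (by simpa using hc)
    exact dvd_rfl
  set u := divXPowOrder (a : ℂ⟦X⟧)
  have hu0 : constantCoeff u ≠ 0 :=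
    constantCoeff_divXPowOrder_eq_zero_iff.not.mpr (by exact_mod_cast ha)
  have hu : Gevrey u := .of_X_pow_mul <| by
    rw [X_pow_order_mul_divXPowOrder]
    exact (hmem a).mp a.2
  have huc : Gevrey (u * c) := .of_X_pow_mul <| by
    rw [← mul_assoc, X_pow_order_mul_divXPowOrder, ← hc]
    exact (hmem b).mp b.2
  have hc_eq : c = u⁻¹ * (u * c) := by rw [← mul_assoc, PowerSeries.inv_mul_cancel _ hu0, one_mul]
  have hcS : c ∈ S := hc_eq ▸ S.mul_mem ((hmem _).mpr (hu.inv hu0)) ((hmem _).mpr huc)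
  exact ⟨⟨c, hcS⟩, Subtype.ext hc⟩

/-- the full ring `ℂ[[X]]` of formal power series, viewed as a module over
`G` via the inclusion `G ⊆ ℂ[[X]]`, is faithfully flat over `G`.  Here `G` is realized
as a subalgebra `S` of `ℂ[[X]]`. -/
theorem powerSeries_faithfullyFlat_over_gevrey (S : Subalgebra ℂ (PowerSeries ℂ))
    (hS : (S : Set (PowerSeries ℂ)) = {f | Gevrey f}) :
    Module.FaithfullyFlat S (PowerSeries ℂ) :=
  .of_valuationRing_of_dvd_of_algebraMap_dvd fun _ _ => Gevrey.dvd_of_coe_dvd hS
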